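/- Generalized adjoint method with parameter-dependent loss: Let S > 0 and f : [0,S] × ℝ^{n_z} × ℝ^{n_θ} → ℝ^{n_z} be continuously differentiable. Fix θ ∈ ℝ^{n_θ}, suppose z : [0,S] × ℝ^{n_θ} → ℝ^{n_z} is continuously differentiable, solves ∂z/∂s(s,θ) = f(s, z(s,θ), θ) with z(0,θ) = z₀ independent of θ, and v(s) = ∂z/∂θ(s,θ) satisfies the variational equation v'(s) = (∂f/∂z) v(s) + (∂f/∂θ), v(0) = 0 (Jacobians of f evaluated at (s, z(s,θ), θ)). Let L : ℝ^{n_z} × ℝ^{n_θ} → ℝ and l : [0,S] × ℝ^{n_z} × ℝ^{n_θ} → ℝ be continuously differentiable and define the loss with explicit parameter dependence ℓ(θ) = L(z(S,θ), θ) + ∫₀ᔆ l(τ, z(τ,θ), θ) dτ. If a : [0,S] → ℝ^{n_z} satisfies a'(s)ᵀ = −a(s)ᵀ (∂f/∂z)(s, z(s,θ), θ) − (∂l/∂z)(s, z(s,θ), θ) with a(S)ᵀ = (∂L/∂z)(z(S,θ), θ), then dℓ/dθ = (∂L/∂θ)(z(S,θ), θ) + ∫₀ᔆ [ a(τ)ᵀ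 (∂f/∂θ)(τ, z(τ,θ), θ) + (∂l/∂θ)(τ, z(τ,θ), θ) ] dτ. -/

import Mathlib

open MeasureTheory Matrix

/-- The continuous linear map `w ↦ M *ᵥ w` given by a Jacobian matrix `M`. -/
noncomputable def mvCLM {m n : ℕ} (M : Matrix (Fin m) (Fin n) ℝ) :
    (Fin n → ℝ) →L[ℝ] (Fin m → ℝ) :=
  LinearMap.toContinuousLinearMap M.mulVecLin

/-- The continuous linear functional `w ↦ g ⬝ᵥ w` given by a gradient (row) vector `g`. -/
noncomputable def dotCLM {n : ℕ} (g : Fin n → ℝ) : (Fin n → ℝ) →L[ℝ] ℝ :=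
  LinearMap.toContinuousLinearMap
    { toFun := fun w => g ⬝ᵥ w
      map_add' := by intro x y; simp [dotProduct_add]
      map_smul' := by intro c x; simp [dotProduct_smul] }

attribute [local instance] Matrix.normedAddCommGroup Matrix.normedSpace

/-! Differentiating `ℓ` by the chain rule and under the integral sign gives
`dℓ/dθ = L_z v(S) + L_θ + ∫₀ˢ (l_z v + l_θ)`, which involves the sensitivity `v = ∂z/∂θ`.
The adjoint and variational equations combine to `(a v)' = a F_θ - l_z v`, so with `v(0) = 0`
and `a(S) = L_z` the fundamental theorem of calculus turns `L_z v(S) + ∫₀ˢ l_z v` into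
`∫₀ˢ a F_θ`, eliminating `v`. -/

section

variable {E P F : Type*} [NormedAddCommGroup E] [NormedSpace ℝ E] [NormedAddCommGroup P]
  [NormedSpace ℝ P] [NormedAddCommGroup F] [NormedSpace ℝ F]

theorem HasFDerivAt.comp_prodMk_of_partial {φ : E → P → F} {ψ : P → E} {ψ' : P →L[ℝ] E}
    {φ₁ : E →L[ℝ] F} {φ₂ : P →L[ℝ] F} {θ : P}
    (hφ : DifferentiableAt ℝ (fun q : E × P => φ q.1 q.2) (ψ θ, θ))
    (hψ : HasFDerivAt ψ ψ' θ) (h₁ : HasFDerivAt (fun w => φ w θ) φ₁ (ψ θ))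
    (h₂ : HasFDerivAt (φ (ψ θ)) φ₂ θ) :
    HasFDerivAt (fun q => φ (ψ q) q) (φ₁ ∘L ψ' + φ₂) θ := by
  have hD := hφ.hasFDerivAt
  have hD₁ : fderiv ℝ _ (ψ θ, θ) ∘L ContinuousLinearMap.inl ℝ E P = φ₁ :=
    (hD.comp (f := (·, θ)) (ψ θ) (hasFDerivAt_prodMk_left _ _)).unique h₁
  have hD₂ : fderiv ℝ _ (ψ θ, θ) ∘L ContinuousLinearMap.inr ℝ E P = φ₂ :=
    (hD.comp (f := (ψ θ, ·)) θ (hasFDerivAt_prodMk_right _ _)).unique h₂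
  refine (hD.comp (f := fun q => (ψ q, q)) θ (hψ.prodMk (hasFDerivAt_id θ))).congr_fderiv ?_
  ext w
  rw [← hD₁, ← hD₂]
  simp [← map_add]

theorem ContDiff.continuousOn_of_hasFDerivAt_slice {T X Y : Type*} [TopologicalSpace T]
    [NormedAddCommGroup X] [NormedSpace ℝ X] [NormedAddCommGroup Y] [NormedSpace ℝ Y]
    {Φ : X → F} (hΦ : ContDiff ℝ 1 Φ) {c : T → Y → X} {ι : Y →L[ℝ] X} {y : T → Y}
    (hc : ∀ t, HasFDerivAt (c t) ι (y t)) (hcy : Continuous fun t => c t (y t))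
    {D : T → Y →L[ℝ] F} {K : Set T}
    (hD : ∀ t ∈ K, HasFDerivAt (fun w => Φ (c t w)) (D t) (y t)) :
    ContinuousOn D K := by
  have hD_eq : ∀ t ∈ K, fderiv ℝ Φ (c t (y t)) ∘L ι = D t := fun t ht =>
    (((hΦ.differentiable one_ne_zero) _).hasFDerivAt.comp (y t) (hc t)).unique (hD t ht)
  exact (((hΦ.continuous_fderiv one_ne_zero).comp hcy).clm_comp
    continuous_const).continuousOn.congr fun t ht => (hD_eq t ht).symm

theorem ContDiff.continuousOn_of_hasFDerivAt_snd {h : ℝ × E × P → F} (hh : ContDiff ℝ 1 h)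
    {γ : ℝ → E} (hγ : Continuous γ) {θ : P} {D : ℝ → E →L[ℝ] F} {K : Set ℝ}
    (hD : ∀ s ∈ K, HasFDerivAt (fun w => h (s, w, θ)) (D s) (γ s)) : ContinuousOn D K :=
  hh.continuousOn_of_hasFDerivAt_slice
    (fun _ => (hasFDerivAt_const _ _).prodMk ((hasFDerivAt_id _).prodMk (hasFDerivAt_const _ _)))
    (continuous_id.prodMk (hγ.prodMk continuous_const)) hD

theorem ContDiff.continuousOn_of_hasFDerivAt_thd {h : ℝ × E × P → F} (hh : ContDiff ℝ 1 h)
    {γ : ℝ → E} (hγ : Continuous γ) {θ : P} {D : ℝ → P →L[ℝ] F} {K : Set ℝ}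
    (hD : ∀ s ∈ K, HasFDerivAt (fun q => h (s, γ s, q)) (D s) θ) : ContinuousOn D K :=
  hh.continuousOn_of_hasFDerivAt_slice
    (fun _ => (hasFDerivAt_const _ _).prodMk ((hasFDerivAt_const _ _).prodMk (hasFDerivAt_id _)))
    (continuous_id.prodMk (hγ.prodMk continuous_const)) hD

theorem hasFDerivAt_intervalIntegral_of_contDiff [ProperSpace P] {G : ℝ × P → F}
    (hG : ContDiff ℝ 1 G) {a b : ℝ} {x₀ : P} {G' : ℝ → P →L[ℝ] F}
    (hG' : ∀ t ∈ Set.uIcc a b, HasFDerivAt (fun x => G (t, x)) (G' t) x₀) :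
    HasFDerivAt (fun x => ∫ t in a..b, G (t, x)) (∫ t in a..b, G' t) x₀ := by
  set D : ℝ × P → P →L[ℝ] F := fun p => fderiv ℝ (fun x => G (p.1, x)) p.2
  have hslice : ∀ p : ℝ × P, HasFDerivAt (fun x => G (p.1, x)) (D p) p.2 := fun p =>
    ((hG.differentiable one_ne_zero).comp ((differentiable_const p.1).prodMk differentiable_id)
      p.2).hasFDerivAt
  have hD : Continuous D := continuousOn_univ.1 <|
    hG.continuousOn_of_hasFDerivAt_slice (c := fun p x => (p.1, x))
      (fun p => hasFDerivAt_prodMk_right p.1 p.2) continuous_id fun p _ => hslice p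
  obtain ⟨C, hC⟩ := ((isCompact_uIcc (a := a) (b := b)).prod
    (isCompact_closedBall x₀ 1)).exists_bound_of_continuousOn hD.continuousOn
  have hGx : ∀ x, Continuous fun t => G (t, x) := fun x =>
    hG.continuous.comp (continuous_id.prodMk continuous_const)
  have hdominated := hasFDerivAt_integral_of_dominated_of_fderiv_le''
    (F' := fun x t => D (t, x)) (bound := fun _ => C) (μ := volume) (a := a) (b := b)
    (Metric.ball_mem_nhds x₀ one_pos)
    (Filter.Eventually.of_forall fun x => (hGx x).aestronglyMeasurable)
    ((hGx x₀).intervalIntegrable a b)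
    (hD.comp (continuous_id.prodMk continuous_const)).aestronglyMeasurable
    ((ae_restrict_mem measurableSet_uIoc).mono fun t ht x hx =>
      hC _ ⟨Set.uIoc_subset_uIcc ht, Metric.ball_subset_closedBall hx⟩)
    intervalIntegrable_const
    (Filter.Eventually.of_forall fun t x _ => hslice (t, x))
  exact hdominated.congr_fderiv
    (intervalIntegral.integral_congr fun t ht => (hslice (t, x₀)).unique (hG' t ht))

end

theorem dotCLM_apply {n : ℕ} (g w : Fin n → ℝ) : dotCLM g w = g ⬝ᵥ w := rfl

theorem mvCLM_apply {m n : ℕ} (M : Matrix (Fin m) (Fin n) ℝ) (w : Fin n → ℝ) :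
    mvCLM M w = M *ᵥ w := rfl

theorem dotCLM_add {n : ℕ} (g h : Fin n → ℝ) : dotCLM (g + h) = dotCLM g + dotCLM h := by
  ext w; simp [dotCLM_apply, add_dotProduct]

theorem dotCLM_comp_mvCLM {m n : ℕ} (g : Fin m → ℝ) (M : Matrix (Fin m) (Fin n) ℝ) :
    dotCLM g ∘L mvCLM M = dotCLM (g ᵥ* M) := by
  ext w; simp [dotCLM_apply, mvCLM_apply, dotProduct_mulVec]

theorem HasFDerivAt.comp_prodMk_of_partial_dotCLM {m n : ℕ}
    {φ : (Fin m → ℝ) → (Fin n → ℝ) → ℝ} {ψ : (Fin n → ℝ) → Fin m → ℝ}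
    {M : Matrix (Fin m) (Fin n) ℝ} {g₁ : Fin m → ℝ} {g₂ θ : Fin n → ℝ}
    (hφ : DifferentiableAt ℝ (fun q : (Fin m → ℝ) × (Fin n → ℝ) => φ q.1 q.2) (ψ θ, θ))
    (hψ : HasFDerivAt ψ (mvCLM M) θ) (h₁ : HasFDerivAt (fun w => φ w θ) (dotCLM g₁) (ψ θ))
    (h₂ : HasFDerivAt (φ (ψ θ)) (dotCLM g₂) θ) :
    HasFDerivAt (fun q => φ (ψ q) q) (dotCLM (g₁ ᵥ* M + g₂)) θ := by
  simpa only [dotCLM_add, dotCLM_comp_mvCLM] using HasFDerivAt.comp_prodMk_of_partial hφ hψ h₁ h₂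

noncomputable def dotL {n : ℕ} : (Fin n → ℝ) →L[ℝ] (Fin n → ℝ) →L[ℝ] ℝ :=
  LinearMap.toContinuousLinearMap
    { toFun := dotCLM
      map_add' := dotCLM_add
      map_smul' := fun c g => by ext w; simp [dotCLM_apply, smul_dotProduct] }

theorem intervalIntegral_dotCLM {n : ℕ} {g : ℝ → Fin n → ℝ} {a b : ℝ}
    (hg : IntervalIntegrable g volume a b) :
    ∫ t in a..b, dotCLM (g t) = dotCLM (∫ t in a..b, g t) :=
  dotL.intervalIntegral_comp_comm hg

section

variable {T : Type*} [TopologicalSpace T] {K : Set T}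

theorem ContinuousOn.of_dotCLM {n : ℕ} {g : T → Fin n → ℝ}
    (hg : ContinuousOn (fun t => dotCLM (g t)) K) : ContinuousOn g K :=
  continuousOn_pi.2 fun i => by
    simpa [dotCLM_apply] using hg.clm_apply (continuousOn_const (c := Pi.single i 1))

theorem ContinuousOn.of_mvCLM {m n : ℕ} {M : T → Matrix (Fin m) (Fin n) ℝ}
    (hM : ContinuousOn (fun t => mvCLM (M t)) K) : ContinuousOn M K :=
  continuousOn_pi.2 fun i => continuousOn_pi.2 fun j => by
    simpa [mvCLM_apply, Function.comp_def] using
      (continuous_apply i).comp_continuousOn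
        (hM.clm_apply (continuousOn_const (c := Pi.single j 1)))

theorem ContinuousOn.matrix_vecMul {m n : Type*} [Fintype m] {a : T → m → ℝ}
    {M : T → Matrix m n ℝ} (ha : ContinuousOn a K) (hM : ContinuousOn M K) :
    ContinuousOn (fun t => a t ᵥ* M t) K :=
  (continuous_fst.matrix_vecMul continuous_snd).comp_continuousOn (ha.prodMk hM)

end

section

variable {m n : Type*} [Fintype m] [Fintype n]

theorem HasDerivAt.vecMul {a : ℝ → m → ℝ} {v : ℝ → Matrix m n ℝ} {a' : m → ℝ}
    {v' : Matrix m n ℝ} {t : ℝ} (ha : HasDerivAt a a' t) (hv : HasDerivAt v v' t) :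
    HasDerivAt (fun s => a s ᵥ* v s) (a t ᵥ* v' + a' ᵥ* v t) t := by
  let B : (m → ℝ) →L[ℝ] Matrix m n ℝ →L[ℝ] n → ℝ :=
    LinearMap.toContinuousLinearMap
      (LinearMap.toContinuousLinearMap.toLinearMap ∘ₗ Matrix.vecMulBilin ℝ ℝ)
  exact B.hasDerivAt_of_bilinear (fun _ => ha) (fun _ => hv)

theorem HasDerivAt.vecMul_of_adjoint {a : ℝ → m → ℝ} {v : ℝ → Matrix m n ℝ} {A : Matrix m m ℝ}
    {B : Matrix m n ℝ} {g : m → ℝ} {t : ℝ} (ha : HasDerivAt a (-(a t ᵥ* A) - g) t)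
    (hv : HasDerivAt v (A * v t + B) t) :
    HasDerivAt (fun s => a s ᵥ* v s) (a t ᵥ* B - g ᵥ* v t) t := by
  convert ha.vecMul hv using 1
  simp only [Matrix.vecMul_add, Matrix.sub_vecMul, Matrix.neg_vecMul, Matrix.vecMul_vecMul]
  abel

theorem intervalIntegral_vecMul_sub_vecMul_of_adjoint {a : ℝ → m → ℝ} {v : ℝ → Matrix m n ℝ}
    {A : ℝ → Matrix m m ℝ} {B : ℝ → Matrix m n ℝ} {g : ℝ → m → ℝ} {S : ℝ} (hS : 0 ≤ S)
    (ha : ∀ s ∈ Set.Icc 0 S, HasDerivAt a (-(a s ᵥ* A s) - g s) s)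
    (hv : ∀ s ∈ Set.Icc 0 S, HasDerivAt v (A s * v s + B s) s)
    (hint : IntervalIntegrable (fun s => a s ᵥ* B s - g s ᵥ* v s) volume 0 S) :
    ∫ s in (0:ℝ)..S, (a s ᵥ* B s - g s ᵥ* v s) = a S ᵥ* v S - a 0 ᵥ* v 0 := by
  refine intervalIntegral.integral_eq_sub_of_hasDerivAt (f := fun s => a s ᵥ* v s)
    (fun s hs => ?_) hint
  rw [Set.uIcc_of_le hS] at hs
  exact (ha s hs).vecMul_of_adjoint (hv s hs)

end

theorem hasFDerivAt_intervalIntegral_comp_of_partial {m n : ℕ}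
    {l : ℝ → (Fin m → ℝ) → (Fin n → ℝ) → ℝ}
    (hl : ContDiff ℝ 1 (fun q : ℝ × (Fin m → ℝ) × (Fin n → ℝ) => l q.1 q.2.1 q.2.2))
    {z : ℝ → (Fin n → ℝ) → (Fin m → ℝ)} (hz : ContDiff ℝ 1 (fun q : ℝ × (Fin n → ℝ) => z q.1 q.2))
    {S : ℝ} (hS : 0 ≤ S) {θ : Fin n → ℝ} {v : ℝ → Matrix (Fin m) (Fin n) ℝ}
    {lz : ℝ → Fin m → ℝ} {lθ : ℝ → Fin n → ℝ}
    (hv : ∀ s ∈ Set.Icc 0 S, HasFDerivAt (z s) (mvCLM (v s)) θ)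
    (hlz : ∀ s ∈ Set.Icc 0 S, HasFDerivAt (fun w => l s w θ) (dotCLM (lz s)) (z s θ))
    (hlθ : ∀ s ∈ Set.Icc 0 S, HasFDerivAt (l s (z s θ)) (dotCLM (lθ s)) θ) :
    HasFDerivAt (fun θ' => ∫ s in (0:ℝ)..S, l s (z s θ') θ')
      (∫ s in (0:ℝ)..S, dotCLM (lz s ᵥ* v s + lθ s)) θ := by
  refine hasFDerivAt_intervalIntegral_of_contDiff (G := fun p => l p.1 (z p.1 p.2) p.2)
    (hl.comp (contDiff_fst.prodMk (hz.prodMk contDiff_snd))) fun s hs => ?_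
  rw [Set.uIcc_of_le hS] at hs
  exact HasFDerivAt.comp_prodMk_of_partial_dotCLM
    ((hl.differentiable one_ne_zero).comp ((differentiable_const s).prodMk differentiable_id) _)
    (hv s hs) (hlz s hs) (hlθ s hs)

theorem generalized_adjoint_parameter_dependent_loss_general
    {nz nθ : ℕ} {S : ℝ} (hS : 0 < S)
    (f : ℝ → (Fin nz → ℝ) → (Fin nθ → ℝ) → (Fin nz → ℝ))
    (hf : ContDiff ℝ 1 (fun q : ℝ × (Fin nz → ℝ) × (Fin nθ → ℝ) => f q.1 q.2.1 q.2.2))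
    (θ : Fin nθ → ℝ) (z : ℝ → (Fin nθ → ℝ) → (Fin nz → ℝ))
    (hz : ContDiff ℝ 1 (fun q : ℝ × (Fin nθ → ℝ) => z q.1 q.2))
    -- Jacobians of `f` along the solution
    (Fz : ℝ → Matrix (Fin nz) (Fin nz) ℝ) (Fθ : ℝ → Matrix (Fin nz) (Fin nθ) ℝ)
    (hFθ : ∀ s ∈ Set.Icc (0:ℝ) S, HasFDerivAt (fun q => f s (z s θ) q) (mvCLM (Fθ s)) θ)
    -- `v(s) = ∂z/∂θ(s,θ)` satisfies the variational equation with `v 0 = 0`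
    (v : ℝ → Matrix (Fin nz) (Fin nθ) ℝ)
    (hv : ∀ s ∈ Set.Icc (0:ℝ) S, HasFDerivAt (fun q => z s q) (mvCLM (v s)) θ)
    (hvar : ∀ s ∈ Set.Icc (0:ℝ) S, HasDerivAt v (Fz s * v s + Fθ s) s)
    (hv0 : v 0 = 0)
    -- parameter-dependent loss functions and their partial gradients
    (L : (Fin nz → ℝ) → (Fin nθ → ℝ) → ℝ) (l : ℝ → (Fin nz → ℝ) → (Fin nθ → ℝ) → ℝ)
    (hL : ContDiff ℝ 1 (fun q : (Fin nz → ℝ) × (Fin nθ → ℝ) => L q.1 q.2))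
    (hl : ContDiff ℝ 1 (fun q : ℝ × (Fin nz → ℝ) × (Fin nθ → ℝ) => l q.1 q.2.1 q.2.2))
    (Lz : Fin nz → ℝ) (lz : ℝ → (Fin nz → ℝ))
    (hLz : HasFDerivAt (fun w => L w θ) (dotCLM Lz) (z S θ))
    (hlz : ∀ s ∈ Set.Icc (0:ℝ) S, HasFDerivAt (fun w => l s w θ) (dotCLM (lz s)) (z s θ))
    -- the adjoint state
    (a : ℝ → (Fin nz → ℝ))
    (ha : ∀ s ∈ Set.Icc (0:ℝ) S, HasDerivAt a (-(a s ᵥ* Fz s) - lz s) s)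
    (haS : a S = Lz)
    -- partial gradients of `L` and `l` with respect to the parameters
    (Lθgrad : Fin nθ → ℝ) (lθgrad : ℝ → (Fin nθ → ℝ))
    (hLθ : HasFDerivAt (fun q : Fin nθ → ℝ => L (z S θ) q) (dotCLM Lθgrad) θ)
    (hlθ : ∀ s ∈ Set.Icc (0:ℝ) S,
      HasFDerivAt (fun q : Fin nθ → ℝ => l s (z s θ) q) (dotCLM (lθgrad s)) θ) :
    HasFDerivAt
      (fun θ' : Fin nθ → ℝ => L (z S θ') θ' + ∫ τ in (0:ℝ)..S, l τ (z τ θ') θ')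
      (dotCLM (Lθgrad + ∫ τ in (0:ℝ)..S, (a τ ᵥ* Fθ τ + lθgrad τ))) θ := by
  have hzθ : Continuous fun s => z s θ :=
    hz.continuous.comp (continuous_id.prodMk continuous_const)
  have hlz_cont : ContinuousOn lz (Set.Icc 0 S) :=
    .of_dotCLM (hl.continuousOn_of_hasFDerivAt_snd hzθ hlz)
  have hlθ_cont : ContinuousOn lθgrad (Set.Icc 0 S) :=
    .of_dotCLM (hl.continuousOn_of_hasFDerivAt_thd hzθ hlθ)
  have hFθ_cont : ContinuousOn Fθ (Set.Icc 0 S) :=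
    .of_mvCLM (hf.continuousOn_of_hasFDerivAt_thd hzθ hFθ)
  have ha_cont : ContinuousOn a (Set.Icc 0 S) := fun s hs =>
    (ha s hs).continuousAt.continuousWithinAt
  have hv_cont : ContinuousOn v (Set.Icc 0 S) := fun s hs =>
    (hvar s hs).continuousAt.continuousWithinAt
  have hint_run : IntervalIntegrable (fun s => lz s ᵥ* v s + lθgrad s) volume 0 S :=
    ((hlz_cont.matrix_vecMul hv_cont).add hlθ_cont).intervalIntegrable_of_Icc hS.le
  have hint_adj : IntervalIntegrable (fun s => a s ᵥ* Fθ s - lz s ᵥ* v s) volume 0 S :=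
    ((ha_cont.matrix_vecMul hFθ_cont).sub
      (hlz_cont.matrix_vecMul hv_cont)).intervalIntegrable_of_Icc hS.le
  have hterminal : HasFDerivAt (fun θ' => L (z S θ') θ') (dotCLM (Lz ᵥ* v S + Lθgrad)) θ :=
    .comp_prodMk_of_partial_dotCLM (hL.differentiable one_ne_zero _) (hv S ⟨hS.le, le_rfl⟩) hLz hLθ
  have hrunning := hasFDerivAt_intervalIntegral_comp_of_partial hl hz hS.le hv hlz hlθ
  rw [intervalIntegral_dotCLM hint_run] at hrunning
  have hpairing := intervalIntegral_vecMul_sub_vecMul_of_adjoint hS.le ha hvar hint_adj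
  rw [haS, hv0, vecMul_zero, sub_zero] at hpairing
  have hadjoint : ∫ s in (0:ℝ)..S, (a s ᵥ* Fθ s + lθgrad s)
      = Lz ᵥ* v S + ∫ s in (0:ℝ)..S, (lz s ᵥ* v s + lθgrad s) := by
    rw [← hpairing, ← intervalIntegral.integral_add hint_adj hint_run]
    exact intervalIntegral.integral_congr fun s _ => by abel
  refine (hterminal.add hrunning).congr_fderiv ?_
  rw [← dotCLM_add, hadjoint, ← add_assoc, add_comm Lθgrad]

/-- **Generalized adjoint method with parameter-dependent loss.**
For the Neural ODE `ż(s,θ) = f(s, z(s,θ), θ)`, `z(0,θ) = z₀`, with loss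
`ℓ(θ) = L(z(S,θ), θ) + ∫₀ˢ l(τ, z(τ,θ), θ) dτ` depending explicitly on the parameters,
the gradient is
`dℓ/dθ = (∂L/∂θ)(z(S,θ), θ) + ∫₀ˢ [ a(τ)ᵀ (∂f/∂θ)(τ, z(τ,θ), θ) + (∂l/∂θ)(τ, z(τ,θ), θ) ] dτ`,
where `a` is the adjoint state. -/
theorem generalized_adjoint_parameter_dependent_loss
    {nz nθ : ℕ} {S : ℝ} (hS : 0 < S)
    (f : ℝ → (Fin nz → ℝ) → (Fin nθ → ℝ) → (Fin nz → ℝ))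
    (hf : ContDiff ℝ 1 (fun q : ℝ × (Fin nz → ℝ) × (Fin nθ → ℝ) => f q.1 q.2.1 q.2.2))
    (θ : Fin nθ → ℝ) (z : ℝ → (Fin nθ → ℝ) → (Fin nz → ℝ)) (z₀ : Fin nz → ℝ)
    (hz : ContDiff ℝ 1 (fun q : ℝ × (Fin nθ → ℝ) => z q.1 q.2))
    (hode : ∀ s ∈ Set.Icc (0:ℝ) S, HasDerivAt (fun u => z u θ) (f s (z s θ) θ) s)
    (hinit : ∀ θ' : Fin nθ → ℝ, z 0 θ' = z₀)
    -- Jacobians of `f` along the solution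
    (Fz : ℝ → Matrix (Fin nz) (Fin nz) ℝ) (Fθ : ℝ → Matrix (Fin nz) (Fin nθ) ℝ)
    (hFz : ∀ s ∈ Set.Icc (0:ℝ) S, HasFDerivAt (fun w => f s w θ) (mvCLM (Fz s)) (z s θ))
    (hFθ : ∀ s ∈ Set.Icc (0:ℝ) S, HasFDerivAt (fun q => f s (z s θ) q) (mvCLM (Fθ s)) θ)
    -- `v(s) = ∂z/∂θ(s,θ)` satisfies the variational equation with `v 0 = 0`
    (v : ℝ → Matrix (Fin nz) (Fin nθ) ℝ)
    (hv : ∀ s ∈ Set.Icc (0:ℝ) S, HasFDerivAt (fun q => z s q) (mvCLM (v s)) θ)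
    (hvar : ∀ s ∈ Set.Icc (0:ℝ) S, HasDerivAt v (Fz s * v s + Fθ s) s)
    (hv0 : v 0 = 0)
    -- parameter-dependent loss functions and their partial gradients
    (L : (Fin nz → ℝ) → (Fin nθ → ℝ) → ℝ) (l : ℝ → (Fin nz → ℝ) → (Fin nθ → ℝ) → ℝ)
    (hL : ContDiff ℝ 1 (fun q : (Fin nz → ℝ) × (Fin nθ → ℝ) => L q.1 q.2))
    (hl : ContDiff ℝ 1 (fun q : ℝ × (Fin nz → ℝ) × (Fin nθ → ℝ) => l q.1 q.2.1 q.2.2))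
    (Lz : Fin nz → ℝ) (lz : ℝ → (Fin nz → ℝ))
    (hLz : HasFDerivAt (fun w => L w θ) (dotCLM Lz) (z S θ))
    (hlz : ∀ s ∈ Set.Icc (0:ℝ) S, HasFDerivAt (fun w => l s w θ) (dotCLM (lz s)) (z s θ))
    -- the adjoint state
    (a : ℝ → (Fin nz → ℝ))
    (ha : ∀ s ∈ Set.Icc (0:ℝ) S, HasDerivAt a (-(a s ᵥ* Fz s) - lz s) s)
    (haS : a S = Lz)
    -- partial gradients of `L` and `l` with respect to the parameters
    (Lθgrad : Fin nθ → ℝ) (lθgrad : ℝ → (Fin nθ → ℝ))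
    (hLθ : HasFDerivAt (fun q : Fin nθ → ℝ => L (z S θ) q) (dotCLM Lθgrad) θ)
    (hlθ : ∀ s ∈ Set.Icc (0:ℝ) S,
      HasFDerivAt (fun q : Fin nθ → ℝ => l s (z s θ) q) (dotCLM (lθgrad s)) θ) :
    HasFDerivAt
      (fun θ' : Fin nθ → ℝ => L (z S θ') θ' + ∫ τ in (0:ℝ)..S, l τ (z τ θ') θ')
      (dotCLM (Lθgrad + ∫ τ in (0:ℝ)..S, (a τ ᵥ* Fθ τ + lθgrad τ))) θ :=
  generalized_adjoint_parameter_dependent_loss_general hS f hf θ z hz Fz Fθ hFθ v hv hvar hv0 L l hL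
    hl Lz lz hLz hlz a ha haS Lθgrad lθgrad hLθ hlθ
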